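/- Let u and v be nodes of the parse tree of R such that u is an ancestor of v. If v ∈ lastextent(p) for some p ∈ last(u), then last(v) ⊆ last(u). -/

import Mathlib

/-- Non-empty regular expressions over alphabet `α`, identified with their parse trees. -/
inductive RE (α : Type) : Type where
  | eps : RE α
  | ch : α → RE α
  | cat : RE α → RE α → RE α
  | alt : RE α → RE α → RE α
  | star : RE α → RE α

/-- Child directions in the parse tree (a `star`-node only has an `L` child). -/
inductive Dir : Type where
  | L : Dir
  | R : Dir
  deriving DecidableEq

/-- A node of the parse tree is identified with the path from the root to it. -/
abbrev TreePath : Type := List Dir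

namespace RE

variable {α : Type}

/-- The subexpression of `R` rooted at the node reached by following path `v`
(`none` if no such node exists). -/
def sub : RE α → TreePath → Option (RE α)
  | r, [] => some r
  | .cat r _, .L :: p => sub r p
  | .cat _ s, .R :: p => sub s p
  | .alt r _, .L :: p => sub r p
  | .alt _ s, .R :: p => sub s p
  | .star r, .L :: p => sub r p
  | _, _ => none

/-- `v` is a node of the parse tree of `R`. -/
def IsNode (R : RE α) (v : TreePath) : Prop := ∃ r, R.sub v = some r

/-- The label of a position (character leaf); `none` if `p` is not a position. -/
def labelOf (R : RE α) (p : TreePath) : Option α :=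
  match R.sub p with
  | some (.ch a) => some a
  | _ => none

/-- `p` is a position of `R`, i.e. a leaf labeled by a character. -/
def IsPos (R : RE α) (p : TreePath) : Prop := ∃ a, R.labelOf p = some a

/-- `v` is a `⊙`-node (concatenation node). -/
def IsCatNode (R : RE α) (v : TreePath) : Prop := ∃ r s, R.sub v = some (.cat r s)

/-- `v` is a `∗`-node (Kleene-star node). -/
def IsStarNode (R : RE α) (v : TreePath) : Prop := ∃ r, R.sub v = some (.star r)

/-- `PosSeq r w` holds when `w` is a sequence of (paths to) positions of `r`
whose labels spell some string of `L(r)`. -/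
inductive PosSeq : RE α → List TreePath → Prop where
  | eps : PosSeq .eps []
  | ch (a : α) : PosSeq (.ch a) [[]]
  | cat {r s : RE α} {u v : List TreePath} : PosSeq r u → PosSeq s v →
      PosSeq (.cat r s) (u.map (Dir.L :: ·) ++ v.map (Dir.R :: ·))
  | altL {r s : RE α} {u : List TreePath} : PosSeq r u → PosSeq (.alt r s) (u.map (Dir.L :: ·))
  | altR {r s : RE α} {v : List TreePath} : PosSeq s v → PosSeq (.alt r s) (v.map (Dir.R :: ·))
  | starNil {r : RE α} : PosSeq (.star r) []
  | starCons {r : RE α} {u w : List TreePath} : PosSeq r u → PosSeq (.star r) w →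
      PosSeq (.star r) (u.map (Dir.L :: ·) ++ w)

/-- `first(v)`: the positions (as paths in `R`) that occur first in a position
sequence of the subexpression rooted at `v`. -/
def firstSet (R : RE α) (v : TreePath) : Set TreePath :=
  {p | ∃ r, R.sub v = some r ∧ ∃ p' w, PosSeq r (p' :: w) ∧ p = v ++ p'}

/-- `last(v)`: the positions (as paths in `R`) that occur last in a position
sequence of the subexpression rooted at `v`. -/
def lastSet (R : RE α) (v : TreePath) : Set TreePath :=
  {p | ∃ r, R.sub v = some r ∧ ∃ w p', PosSeq r (w ++ [p']) ∧ p = v ++ p'}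

/-- `follow(R,p)`: the positions that can follow `p` in a position sequence of `R`. -/
def followSet (R : RE α) (p : TreePath) : Set TreePath :=
  {q | ∃ w₁ w₂, PosSeq R (w₁ ++ p :: q :: w₂)}

/-- `firstextent(p) = {v : p ∈ first(v)}`. -/
def firstExtent (R : RE α) (p : TreePath) : Set TreePath := {v | p ∈ R.firstSet v}

/-- `lastextent(p) = {v : p ∈ last(v)}`. -/
def lastExtent (R : RE α) (p : TreePath) : Set TreePath := {v | p ∈ R.lastSet v}

/-- `firstextent(P)` for a set of positions `P`. -/
def firstExtentSet (R : RE α) (P : Set TreePath) : Set TreePath := ⋃ p ∈ P, R.firstExtent p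

/-- `lastextent(P)` for a set of positions `P`. -/
def lastExtentSet (R : RE α) (P : Set TreePath) : Set TreePath := ⋃ p ∈ P, R.lastExtent p

end RE

/-- Lowest common ancestor of two nodes = longest common prefix of the paths. -/
def lcaP : TreePath → TreePath → TreePath
  | a :: p, b :: q => if a = b then a :: lcaP p q else []
  | _, _ => []

namespace RE

variable {α : Type}

/-- `u = parent*(v)`: `u` is the lowest ancestor of `v` (possibly `v` itself)
that is a `∗`-node. -/
def IsLowestStarAnc (R : RE α) (v u : TreePath) : Prop :=
  u <+: v ∧ R.IsStarNode u ∧ ∀ w, w <+: v → R.IsStarNode w → w <+: u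

/-- `δ(p,α)`: the `α`-transitions of the position automaton out of position `p`. -/
def delta (R : RE α) (p : TreePath) (a : α) : Set TreePath :=
  {q | R.labelOf q = some a ∧ q ∈ R.followSet p}

/-- `δ(P,α) = ∪_{p ∈ P} δ(p,α)`. -/
def deltaSet (R : RE α) (P : Set TreePath) (a : α) : Set TreePath := ⋃ p ∈ P, R.delta p a

/-- Internal `⊙`-transition: `δ⊙(v,α) = {q ∈ Pos_α : right(v) ∈ firstextent(q)}`. -/
def deltaOdot (R : RE α) (v : TreePath) (a : α) : Set TreePath :=
  {q | R.labelOf q = some a ∧ q ∈ R.firstSet (v ++ [Dir.R])}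

/-- Internal `∗`-transition: `δ∗(v,α) = {q ∈ Pos_α : parent*(v) ∈ firstextent(q)}`. -/
def deltaStar (R : RE α) (v : TreePath) (a : α) : Set TreePath :=
  {q | R.labelOf q = some a ∧ ∃ u, R.IsLowestStarAnc v u ∧ q ∈ R.firstSet u}

/-- `N⊙(P,α)`: the `⊙`-transition nodes. -/
def NOdot (R : RE α) (P : Set TreePath) (a : α) : Set TreePath :=
  {v | R.IsCatNode v ∧ (v ++ [Dir.L]) ∈ R.lastExtentSet P ∧
    (∃ q, R.labelOf q = some a ∧ q ∈ R.firstSet (v ++ [Dir.R]))}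

/-- `N∗(P,α)`: the `∗`-transition nodes. -/
def NStar (R : RE α) (P : Set TreePath) (a : α) : Set TreePath :=
  {u | R.IsStarNode u ∧
    (∃ p ∈ P, ∃ q, R.labelOf q = some a ∧ R.IsLowestStarAnc (lcaP p q) u) ∧
    (∃ p ∈ P, p ∈ R.lastSet u) ∧ (∃ q, R.labelOf q = some a ∧ q ∈ R.firstSet u)}

/-- `u` `∗`-dominates `v`: `u` is a proper ancestor of `v` and `first(v) ⊆ first(u)`. -/
def StarDom (R : RE α) (u v : TreePath) : Prop :=
  u <+: v ∧ u ≠ v ∧ R.firstSet v ⊆ R.firstSet u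

/-- `u` `⊙`-dominates `v`: `u` is a proper ancestor of `v` and
`first(right(v)) ⊆ first(right(u))`. -/
def OdotDom (R : RE α) (u v : TreePath) : Prop :=
  u <+: v ∧ u ≠ v ∧ R.firstSet (v ++ [Dir.R]) ⊆ R.firstSet (u ++ [Dir.R])

/-- `Ñ⊙(P,α)`: the relevant `⊙`-transition nodes. -/
def RelNOdot (R : RE α) (P : Set TreePath) (a : α) : Set TreePath :=
  {v ∈ R.NOdot P a | ∀ u ∈ R.NOdot P a, ¬ R.OdotDom u v}

/-- `Ñ∗(P,α)`: the relevant `∗`-transition nodes. -/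
def RelNStar (R : RE α) (P : Set TreePath) (a : α) : Set TreePath :=
  {v ∈ R.NStar P a | ∀ u ∈ R.NStar P a, ¬ R.StarDom u v}

/-- `v` is a node of the transition tree `T` of `P`: an ancestor of some position of `P`. -/
def InT (R : RE α) (P : Set TreePath) (v : TreePath) : Prop := ∃ p ∈ P, v <+: p

/-- `v` is a branching node of the transition tree of `P`: both children are in `T`. -/
def Branching (R : RE α) (P : Set TreePath) (v : TreePath) : Prop :=
  R.InT P (v ++ [Dir.L]) ∧ R.InT P (v ++ [Dir.R])

/-- `v` is a leaf of the transition tree of `P`. -/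
def LeafT (R : RE α) (P : Set TreePath) (v : TreePath) : Prop :=
  R.InT P v ∧ ∀ d : Dir, ¬ R.InT P (v ++ [d])

/-- `v` is a `⊙`-live node: a `⊙`-node with `left(v) ∈ lastextent(P)`. -/
def OdotLive (R : RE α) (P : Set TreePath) (v : TreePath) : Prop :=
  R.IsCatNode v ∧ (v ++ [Dir.L]) ∈ R.lastExtentSet P

/-- `v` is weakly `⊙`-dominated by `u`: `u` is `⊙`-live, a proper ancestor of `v`,
and `first(v) ⊆ first(right(u))`. -/
def WeakOdotDom (R : RE α) (P : Set TreePath) (u v : TreePath) : Prop :=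
  R.OdotLive P u ∧ u <+: v ∧ u ≠ v ∧ R.firstSet v ⊆ R.firstSet (u ++ [Dir.R])

/-- The pair `(t, b)` delimits a segment of the transition tree of `P`: a path from a
leaf or branching node `b` up to the nearest branching node `t` strictly above it
(or to the root if there is none). -/
def IsSegment (R : RE α) (P : Set TreePath) (t b : TreePath) : Prop :=
  R.InT P b ∧ t <+: b ∧ t ≠ b ∧
  (R.LeafT P b ∨ R.Branching P b) ∧
  (R.Branching P t ∨ t = []) ∧
  (∀ w, t <+: w → w <+: b → w ≠ t → w ≠ b → ¬ R.Branching P w)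

/-- The language `L(R)`. -/
def lang : RE α → Set (List α)
  | .eps => {[]}
  | .ch a => {[a]}
  | .cat r s => {w | ∃ u ∈ lang r, ∃ v ∈ lang s, w = u ++ v}
  | .alt r s => lang r ∪ lang s
  | .star r => {w | ∃ l : List (List α), (∀ u ∈ l, u ∈ lang r) ∧ w = l.flatten}

/-- The position automaton (Glushkov automaton) of `R`: states are the positions of `R`
plus a start state `none`; for `q ∈ first(R)` there is a transition `(p₀, q, label(q))`,
and for `q ∈ follow(R,p)` a transition `(p, q, label(q))`; accepting states are
`last(R)`, together with `p₀` if `ε ∈ L(R)`. -/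
def posNFA (R : RE α) : NFA α (Option TreePath) where
  step := fun s a =>
    {t | ∃ q : TreePath, t = some q ∧ R.labelOf q = some a ∧
      ((s = none ∧ q ∈ R.firstSet []) ∨ (∃ p, s = some p ∧ q ∈ R.followSet p))}
  start := {none}
  accept := {t | (∃ p, t = some p ∧ p ∈ R.lastSet []) ∨ (t = none ∧ [] ∈ R.lang)}

end RE

namespace RE
variable {α : Type}

theorem sub_nil' (R : RE α) : R.sub [] = some R := by cases R <;> rfl

theorem sub_append' {R r : RE α} {u : TreePath} (h : R.sub u = some r) (x : TreePath) :
    R.sub (u ++ x) = r.sub x := by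
  induction u generalizing R with
  | nil => rw [sub_nil'] at h; cases h; rfl
  | cons d u ih =>
    cases R with
    | eps => simp [sub] at h
    | ch a => cases d <;> simp [sub] at h
    | cat s t => cases d <;> exact ih h
    | alt s t => cases d <;> exact ih h
    | star s =>
      cases d
      · exact ih h
      · exact absurd h (by simp [sub])

theorem mem_lastSet_append' {R r : RE α} {u : TreePath} (h : R.sub u = some r)
    (x q : TreePath) :
    q ∈ R.lastSet (u ++ x) ↔ ∃ q₀ ∈ r.lastSet x, q = u ++ q₀ := by
  constructor
  · rintro ⟨r', hr', w, p', hseq, rfl⟩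
    rw [sub_append' h] at hr'
    exact ⟨x ++ p', ⟨r', hr', w, p', hseq, rfl⟩, by simp⟩
  · rintro ⟨q₀, ⟨r', hr', w, p', hseq, rfl⟩, rfl⟩
    exact ⟨r', by rw [sub_append' h]; exact hr', w, p', hseq, by simp⟩

theorem mem_lastSet_nil' {R : RE α} {q : TreePath} :
    q ∈ R.lastSet [] ↔ ∃ w, PosSeq R (w ++ [q]) := by
  constructor
  · rintro ⟨r, hr, w, p', hseq, rfl⟩
    rw [sub_nil'] at hr; cases hr; exact ⟨w, hseq⟩
  · rintro ⟨w, hseq⟩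
    exact ⟨R, sub_nil' R, w, q, hseq, rfl⟩

theorem concat_inj'' {β : Type*} {l₁ l₂ : List β} {x y : β}
    (h : l₁ ++ [x] = l₂ ++ [y]) : l₁ = l₂ ∧ x = y := by
  have := List.append_inj' h rfl
  simpa using this

theorem map_cons_last' {d : Dir} {u w : List TreePath} {p : TreePath}
    (h : u.map (d :: ·) = w ++ [d :: p]) : ∃ u', u = u' ++ [p] := by
  rcases u.eq_nil_or_concat with rfl | ⟨u', x, rfl⟩
  · simp at h
  · rw [List.concat_eq_append, List.map_append] at h
    obtain ⟨-, h2⟩ := concat_inj'' (by simpa using h)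
    obtain rfl : x = p := h2
    exact ⟨u', by simp⟩

theorem exists_posSeq' (R : RE α) : ∃ l, PosSeq R l := by
  induction R with
  | eps => exact ⟨[], .eps⟩
  | ch a => exact ⟨[[]], .ch a⟩
  | cat r s ihr ihs => exact ⟨_, .cat ihr.choose_spec ihs.choose_spec⟩
  | alt r s ihr ihs => exact ⟨_, .altL ihr.choose_spec⟩
  | star r _ => exact ⟨[], .starNil⟩

theorem cat_last_L' {r s : RE α} {w : List TreePath} {p : TreePath}
    (h : PosSeq (.cat r s) (w ++ [Dir.L :: p])) :
    PosSeq s [] ∧ ∃ w', PosSeq r (w' ++ [p]) := by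
  generalize hl0 : w ++ [Dir.L :: p] = l at h
  cases h with
  | @cat _ _ u v hu hv =>
    have hl := hl0.symm
    rcases v.eq_nil_or_concat with rfl | ⟨v', x, rfl⟩
    · obtain ⟨u', rfl⟩ := map_cons_last' (by simpa using hl)
      exact ⟨hv, u', by simpa using hu⟩
    · exfalso
      have heq : (u.map (Dir.L :: ·) ++ v'.map (Dir.R :: ·)) ++ [Dir.R :: x] = w ++ [Dir.L :: p] := by
        simp only [List.concat_eq_append, List.map_append] at hl
        simpa using hl
      obtain ⟨-, h2⟩ := concat_inj'' heq
      simp at h2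

theorem cat_last_R' {r s : RE α} {w : List TreePath} {p : TreePath}
    (h : PosSeq (.cat r s) (w ++ [Dir.R :: p])) :
    ∃ w', PosSeq s (w' ++ [p]) := by
  generalize hl0 : w ++ [Dir.R :: p] = l at h
  cases h with
  | @cat _ _ u v hu hv =>
    have hl := hl0.symm
    rcases v.eq_nil_or_concat with rfl | ⟨v', x, rfl⟩
    · exfalso
      rcases u.eq_nil_or_concat with rfl | ⟨u', x, rfl⟩
      · simp at hl
      · have heq : u'.map (Dir.L :: ·) ++ [Dir.L :: x] = w ++ [Dir.R :: p] := by
          simp only [List.concat_eq_append, List.map_append] at hl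
          simpa using hl
        obtain ⟨-, h2⟩ := concat_inj'' heq
        simp at h2
    · have heq : (u.map (Dir.L :: ·) ++ v'.map (Dir.R :: ·)) ++ [Dir.R :: x] = w ++ [Dir.R :: p] := by
        simp only [List.concat_eq_append, List.map_append] at hl
        simpa using hl
      obtain ⟨-, h2⟩ := concat_inj'' heq
      obtain rfl : x = p := by injection h2
      exact ⟨v', by simpa using hv⟩

theorem alt_last_L' {r s : RE α} {w : List TreePath} {p : TreePath}
    (h : PosSeq (.alt r s) (w ++ [Dir.L :: p])) :
    ∃ w', PosSeq r (w' ++ [p]) := by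
  generalize hl0 : w ++ [Dir.L :: p] = l at h
  cases h with
  | @altL _ _ u hu =>
    obtain ⟨u', rfl⟩ := map_cons_last' hl0.symm
    exact ⟨u', by simpa using hu⟩
  | @altR _ _ v hv =>
    exfalso
    have hl := hl0.symm
    rcases v.eq_nil_or_concat with rfl | ⟨v', x, rfl⟩
    · simp at hl
    · have heq : v'.map (Dir.R :: ·) ++ [Dir.R :: x] = w ++ [Dir.L :: p] := by
        simp only [List.concat_eq_append, List.map_append] at hl
        simpa using hl
      obtain ⟨-, h2⟩ := concat_inj'' heq
      simp at h2

theorem alt_last_R' {r s : RE α} {w : List TreePath} {p : TreePath}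
    (h : PosSeq (.alt r s) (w ++ [Dir.R :: p])) :
    ∃ w', PosSeq s (w' ++ [p]) := by
  generalize hl0 : w ++ [Dir.R :: p] = l at h
  cases h with
  | @altR _ _ v hv =>
    obtain ⟨v', rfl⟩ := map_cons_last' hl0.symm
    exact ⟨v', by simpa using hv⟩
  | @altL _ _ u hu =>
    exfalso
    have hl := hl0.symm
    rcases u.eq_nil_or_concat with rfl | ⟨u', x, rfl⟩
    · simp at hl
    · have heq : u'.map (Dir.L :: ·) ++ [Dir.L :: x] = w ++ [Dir.R :: p] := by
        simp only [List.concat_eq_append, List.map_append] at hl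
        simpa using hl
      obtain ⟨-, h2⟩ := concat_inj'' heq
      simp at h2

theorem star_last_aux' {t : RE α} {l : List TreePath} (h : PosSeq t l) :
    ∀ (r : RE α) (w : List TreePath) (p : TreePath), t = .star r → l = w ++ [Dir.L :: p] →
    ∃ w', PosSeq r (w' ++ [p]) := by
  induction h with
  | eps => intro r w p ht _; exact absurd ht (by simp)
  | ch a => intro r w p ht _; exact absurd ht (by simp)
  | cat hu hv ihu ihv => intro r w p ht _; exact absurd ht (by simp)
  | altL hu ih => intro r w p ht _; exact absurd ht (by simp)
  | altR hv ih => intro r w p ht _; exact absurd ht (by simp)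
  | starNil => intro r w p _ hl; simp at hl
  | @starCons r' u w₂ hu hw ihu ihw =>
    intro r w p ht hl
    obtain rfl : r' = r := by injection ht
    rcases w₂.eq_nil_or_concat with rfl | ⟨w₂', x, rfl⟩
    · obtain ⟨u', rfl⟩ := map_cons_last' (by simpa using hl)
      exact ⟨u', hu⟩
    · have heq : (u.map (Dir.L :: ·) ++ w₂') ++ [x] = w ++ [Dir.L :: p] := by
        simp only [List.concat_eq_append] at hl
        simpa using hl
      obtain ⟨-, rfl⟩ := concat_inj'' heq
      exact ihw _ w₂' p rfl (by simp)

theorem star_last' {r : RE α} {w : List TreePath} {p : TreePath}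
    (h : PosSeq (.star r) (w ++ [Dir.L :: p])) :
    ∃ w', PosSeq r (w' ++ [p]) :=
  star_last_aux' h r w p rfl rfl

theorem last_core : ∀ (v : TreePath) (R : RE α) (p : TreePath),
    p ∈ R.lastSet [] → p ∈ R.lastSet v → R.lastSet v ⊆ R.lastSet [] := by
  intro v
  induction v with
  | nil => intro R p _ _ q hq; exact hq
  | cons d v ih =>
    intro R p hp hv q hq
    cases R with
    | eps => simp [lastSet, sub] at hv
    | ch a => rcases hv with ⟨r, hr, -⟩; cases d <;> simp [sub] at hr
    | cat r s =>
      cases d with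
      | L =>
        have hsub : (RE.cat r s).sub [Dir.L] = some r := sub_nil' r
        rw [show (Dir.L :: v : TreePath) = [Dir.L] ++ v from rfl,
          mem_lastSet_append' hsub] at hv hq
        obtain ⟨p₀, hp₀v, rfl⟩ := hv
        obtain ⟨q₀, hq₀v, rfl⟩ := hq
        rw [mem_lastSet_nil'] at hp
        obtain ⟨w, hseq⟩ := hp
        obtain ⟨hnul, w', hseq'⟩ := cat_last_L' hseq
        have hq₀ : q₀ ∈ r.lastSet [] := ih r p₀ (mem_lastSet_nil'.mpr ⟨w', hseq'⟩) hp₀v hq₀v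
        rw [mem_lastSet_nil'] at hq₀ ⊢
        obtain ⟨w₂, hseq₂⟩ := hq₀
        exact ⟨w₂.map (Dir.L :: ·), by simpa using PosSeq.cat hseq₂ hnul⟩
      | R =>
        have hsub : (RE.cat r s).sub [Dir.R] = some s := sub_nil' s
        rw [show (Dir.R :: v : TreePath) = [Dir.R] ++ v from rfl,
          mem_lastSet_append' hsub] at hv hq
        obtain ⟨p₀, hp₀v, rfl⟩ := hv
        obtain ⟨q₀, hq₀v, rfl⟩ := hq
        rw [mem_lastSet_nil'] at hp
        obtain ⟨w, hseq⟩ := hp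
        obtain ⟨w', hseq'⟩ := cat_last_R' hseq
        have hq₀ : q₀ ∈ s.lastSet [] := ih s p₀ (mem_lastSet_nil'.mpr ⟨w', hseq'⟩) hp₀v hq₀v
        rw [mem_lastSet_nil'] at hq₀ ⊢
        obtain ⟨w₂, hseq₂⟩ := hq₀
        obtain ⟨u, hu⟩ := exists_posSeq' r
        refine ⟨u.map (Dir.L :: ·) ++ w₂.map (Dir.R :: ·), ?_⟩
        simpa [List.append_assoc] using PosSeq.cat hu hseq₂
    | alt r s =>
      cases d with
      | L =>
        have hsub : (RE.alt r s).sub [Dir.L] = some r := sub_nil' r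
        rw [show (Dir.L :: v : TreePath) = [Dir.L] ++ v from rfl,
          mem_lastSet_append' hsub] at hv hq
        obtain ⟨p₀, hp₀v, rfl⟩ := hv
        obtain ⟨q₀, hq₀v, rfl⟩ := hq
        rw [mem_lastSet_nil'] at hp
        obtain ⟨w, hseq⟩ := hp
        obtain ⟨w', hseq'⟩ := alt_last_L' hseq
        have hq₀ : q₀ ∈ r.lastSet [] := ih r p₀ (mem_lastSet_nil'.mpr ⟨w', hseq'⟩) hp₀v hq₀v
        rw [mem_lastSet_nil'] at hq₀ ⊢
        obtain ⟨w₂, hseq₂⟩ := hq₀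
        exact ⟨w₂.map (Dir.L :: ·), by simpa using PosSeq.altL (s := s) hseq₂⟩
      | R =>
        have hsub : (RE.alt r s).sub [Dir.R] = some s := sub_nil' s
        rw [show (Dir.R :: v : TreePath) = [Dir.R] ++ v from rfl,
          mem_lastSet_append' hsub] at hv hq
        obtain ⟨p₀, hp₀v, rfl⟩ := hv
        obtain ⟨q₀, hq₀v, rfl⟩ := hq
        rw [mem_lastSet_nil'] at hp
        obtain ⟨w, hseq⟩ := hp
        obtain ⟨w', hseq'⟩ := alt_last_R' hseq
        have hq₀ : q₀ ∈ s.lastSet [] := ih s p₀ (mem_lastSet_nil'.mpr ⟨w', hseq'⟩) hp₀v hq₀v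
        rw [mem_lastSet_nil'] at hq₀ ⊢
        obtain ⟨w₂, hseq₂⟩ := hq₀
        exact ⟨w₂.map (Dir.R :: ·), by simpa using PosSeq.altR (r := r) hseq₂⟩
    | star r =>
      cases d with
      | L =>
        have hsub : (RE.star r).sub [Dir.L] = some r := sub_nil' r
        rw [show (Dir.L :: v : TreePath) = [Dir.L] ++ v from rfl,
          mem_lastSet_append' hsub] at hv hq
        obtain ⟨p₀, hp₀v, rfl⟩ := hv
        obtain ⟨q₀, hq₀v, rfl⟩ := hq
        rw [mem_lastSet_nil'] at hp
        obtain ⟨w, hseq⟩ := hp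
        obtain ⟨w', hseq'⟩ := star_last' hseq
        have hq₀ : q₀ ∈ r.lastSet [] := ih r p₀ (mem_lastSet_nil'.mpr ⟨w', hseq'⟩) hp₀v hq₀v
        rw [mem_lastSet_nil'] at hq₀ ⊢
        obtain ⟨w₂, hseq₂⟩ := hq₀
        refine ⟨w₂.map (Dir.L :: ·), ?_⟩
        simpa using PosSeq.starCons hseq₂ PosSeq.starNil
      | R => rcases hv with ⟨r', hr', -⟩; simp [sub] at hr'

end RE

/-- If `u` is an ancestor of `v` and `v ∈ lastextent(p)` for some `p ∈ last(u)`,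
then `last(v) ⊆ last(u)`. -/
theorem last_subset_of_lastExtent {α : Type} (R : RE α) (u v : TreePath)
    (hanc : u <+: v) (p : TreePath) (hp : p ∈ R.lastSet u)
    (hv : v ∈ R.lastExtent p) :
    R.lastSet v ⊆ R.lastSet u := by
  obtain ⟨v₁, rfl⟩ := hanc
  have hpc := hp
  obtain ⟨r, hr, -⟩ := hpc
  have hp' : ∃ q₀ ∈ r.lastSet [], p = u ++ q₀ :=
    (RE.mem_lastSet_append' hr [] p).mp (by simpa using hp)
  obtain ⟨p₀, hp₀, rfl⟩ := hp'
  obtain ⟨p₁, hp₁, heq⟩ := (RE.mem_lastSet_append' hr v₁ (u ++ p₀)).mp hv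
  obtain rfl : p₀ = p₁ := List.append_cancel_left heq
  have hsub := RE.last_core v₁ r p₀ hp₀ hp₁
  intro q hq
  obtain ⟨q₀, hq₀, rfl⟩ := (RE.mem_lastSet_append' hr v₁ q).mp hq
  have h1 : q₀ ∈ r.lastSet [] := hsub hq₀
  have h2 := (RE.mem_lastSet_append' hr [] (u ++ q₀)).mpr ⟨q₀, h1, rfl⟩
  simpa using h2
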